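/- arXiv:2411.03617 — 3 statements merged into one kernel-verified Lean document; each statement's English description precedes it below -/
import Mathlib

section
/- Let ε ∈ (0,1), let X be an n×d real matrix of rank d whose rows x_1ᵀ,…,x_nᵀ satisfy ∑_{i=s+1}^n ℓ_i(X) < ε for some s < n, where ℓ_i(X) = x_iᵀ(XᵀX)⁻¹x_i. Let X_s be the matrix formed by the first s rows of X. Then (1−ε)·XᵀX ≺ X_sᵀX_s ≼ XᵀX, where ≺ denotes strict positive definiteness of the difference. -/
open Matrix

private lemma symm_shift {d : ℕ} (M : Matrix (Fin d) (Fin d) ℝ) (hM : Mᵀ = M)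
    (u w : Fin d → ℝ) : (M *ᵥ u) ⬝ᵥ w = u ⬝ᵥ (M *ᵥ w) := by
  rw [dotProduct_comm, Matrix.dotProduct_mulVec, ← Matrix.mulVec_transpose, hM,
    dotProduct_comm]

private lemma quad_form {n d : ℕ} (M : Matrix (Fin n) (Fin d) ℝ) (v : Fin d → ℝ) :
    v ⬝ᵥ ((Mᵀ * M) *ᵥ v) = ∑ j, (M j ⬝ᵥ v) ^ 2 := by
  rw [← Matrix.mulVec_mulVec, Matrix.dotProduct_mulVec, Matrix.vecMul_transpose]
  simp only [dotProduct, sq]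
  rfl

private lemma cauchy_dot {d : ℕ} (a b : Fin d → ℝ) :
    (a ⬝ᵥ b) ^ 2 ≤ (a ⬝ᵥ a) * (b ⬝ᵥ b) := by
  simpa [dotProduct, sq] using
    Finset.sum_mul_sq_le_sq_mul_sq Finset.univ a b

private lemma mulVecLin_inj {n d : ℕ} (X : Matrix (Fin n) (Fin d) ℝ) (hX : X.rank = d) :
    Function.Injective X.mulVecLin := by
  rw [← LinearMap.ker_eq_bot]
  have h2 := LinearMap.finrank_range_add_finrank_ker X.mulVecLin
  rw [Matrix.rank] at hX
  have hdom : Module.finrank ℝ (Fin d → ℝ) = d := by simp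
  have hker : Module.finrank ℝ (LinearMap.ker X.mulVecLin) = 0 := by omega
  exact Submodule.finrank_eq_zero.mp hker

theorem deterministic_sampling_subspace_embedding
    {n d s : ℕ} (X : Matrix (Fin n) (Fin d) ℝ) (hX : X.rank = d)
    (ε : ℝ) (hε : ε ∈ Set.Ioo (0 : ℝ) 1) (hs : s < n)
    (hlev : ∑ i ∈ Finset.univ.filter (fun i : Fin n => s ≤ (i : ℕ)),
      X i ⬝ᵥ ((Xᵀ * X)⁻¹ *ᵥ X i) < ε)
    (Xs : Matrix (Fin s) (Fin d) ℝ)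
    (hXs : Xs = Matrix.of (fun (i : Fin s) (j : Fin d) => X (Fin.castLE hs.le i) j)) :
    (Xsᵀ * Xs - (1 - ε) • (Xᵀ * X)).PosDef ∧ (Xᵀ * X - Xsᵀ * Xs).PosSemidef := by
  set A := Xᵀ * X with hA_def
  -- A is positive definite
  have hinj : Function.Injective X.mulVecLin := mulVecLin_inj X hX
  have hA : A.PosDef := by
    refine Matrix.PosDef.of_dotProduct_mulVec_pos (Matrix.isHermitian_conjTranspose_mul_self X) fun v hv => ?_
    simp only [star_trivial]
    rw [quad_form]
    have hXv : X *ᵥ v ≠ 0 := by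
      intro h
      exact hv (hinj (by simpa using h))
    obtain ⟨j, hj⟩ := Function.ne_iff.mp hXv
    refine Finset.sum_pos' (fun i _ => sq_nonneg _) ⟨j, Finset.mem_univ _, ?_⟩
    have hne : X j ⬝ᵥ v ≠ 0 := hj
    exact lt_of_le_of_ne (sq_nonneg _) (Ne.symm (pow_ne_zero 2 hne))
  have hAsymm : Aᵀ = A := hA.1
  have hdet : IsUnit A.det := isUnit_iff_ne_zero.mpr hA.det_pos.ne'
  -- square root
  obtain ⟨S, hSsymm, hS2⟩ : ∃ S : Matrix (Fin d) (Fin d) ℝ, Sᵀ = S ∧ S * S = A := by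
    open scoped MatrixOrder in
    exact ⟨CFC.sqrt A, (CFC.sqrt_nonneg A).posSemidef.1,
      CFC.sqrt_mul_sqrt_self A hA.posSemidef.nonneg⟩
  -- quadratic form decompositions
  have key : ∀ v : Fin d → ℝ, v ≠ 0 →
      (∑ j ∈ Finset.univ.filter (fun j : Fin n => s ≤ (j : ℕ)), (X j ⬝ᵥ v) ^ 2)
        < ε * (v ⬝ᵥ (A *ᵥ v)) := by
    intro v hv
    have hP : 0 < v ⬝ᵥ (A *ᵥ v) := by simpa using hA.dotProduct_mulVec_pos hv
    have hterm : ∀ j : Fin n,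
        (X j ⬝ᵥ v) ^ 2 ≤ (X j ⬝ᵥ (A⁻¹ *ᵥ X j)) * (v ⬝ᵥ (A *ᵥ v)) := by
      intro j
      set u := A⁻¹ *ᵥ X j with hu
      have hAu : A *ᵥ u = X j := by
        rw [hu, Matrix.mulVec_mulVec, Matrix.mul_nonsing_inv A hdet, Matrix.one_mulVec]
      have h1 : (S *ᵥ u) ⬝ᵥ (S *ᵥ v) = X j ⬝ᵥ v := by
        rw [symm_shift S hSsymm, Matrix.mulVec_mulVec, hS2, ← symm_shift A hAsymm, hAu]
      have h2 : (S *ᵥ u) ⬝ᵥ (S *ᵥ u) = X j ⬝ᵥ u := by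
        rw [symm_shift S hSsymm, Matrix.mulVec_mulVec, hS2, ← symm_shift A hAsymm, hAu]
      have h3 : (S *ᵥ v) ⬝ᵥ (S *ᵥ v) = v ⬝ᵥ (A *ᵥ v) := by
        rw [symm_shift S hSsymm, Matrix.mulVec_mulVec, hS2]
      calc (X j ⬝ᵥ v) ^ 2 = ((S *ᵥ u) ⬝ᵥ (S *ᵥ v)) ^ 2 := by rw [h1]
        _ ≤ ((S *ᵥ u) ⬝ᵥ (S *ᵥ u)) * ((S *ᵥ v) ⬝ᵥ (S *ᵥ v)) := cauchy_dot _ _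
        _ = (X j ⬝ᵥ u) * (v ⬝ᵥ (A *ᵥ v)) := by rw [h2, h3]
    calc (∑ j ∈ Finset.univ.filter (fun j : Fin n => s ≤ (j : ℕ)), (X j ⬝ᵥ v) ^ 2)
        ≤ ∑ j ∈ Finset.univ.filter (fun j : Fin n => s ≤ (j : ℕ)),
            (X j ⬝ᵥ (A⁻¹ *ᵥ X j)) * (v ⬝ᵥ (A *ᵥ v)) :=
          Finset.sum_le_sum fun j _ => hterm j
      _ = (∑ j ∈ Finset.univ.filter (fun j : Fin n => s ≤ (j : ℕ)),
            X j ⬝ᵥ (A⁻¹ *ᵥ X j)) * (v ⬝ᵥ (A *ᵥ v)) := by rw [Finset.sum_mul]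
      _ < ε * (v ⬝ᵥ (A *ᵥ v)) := by
          exact mul_lt_mul_of_pos_right hlev hP
  -- decomposition of the full quadratic form
  have split : ∀ v : Fin d → ℝ,
      v ⬝ᵥ ((Xsᵀ * Xs) *ᵥ v)
        = v ⬝ᵥ (A *ᵥ v)
          - ∑ j ∈ Finset.univ.filter (fun j : Fin n => s ≤ (j : ℕ)), (X j ⬝ᵥ v) ^ 2 := by
    intro v
    rw [quad_form, quad_form]
    have hbij : ∑ i : Fin s, (Xs i ⬝ᵥ v) ^ 2
        = ∑ j ∈ Finset.univ.filter (fun j : Fin n => (j : ℕ) < s), (X j ⬝ᵥ v) ^ 2 := by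
      refine Finset.sum_bij' (fun (a : Fin s) (_ : a ∈ Finset.univ) => Fin.castLE hs.le a)
        (fun (b : Fin n) (hb : b ∈ Finset.univ.filter (fun j : Fin n => (j : ℕ) < s)) =>
          (⟨(b : ℕ), (Finset.mem_filter.mp hb).2⟩ : Fin s))
        (fun a _ => Finset.mem_filter.mpr ⟨Finset.mem_univ _, a.isLt⟩)
        (fun b _ => Finset.mem_univ _)
        (fun a _ => by ext; simp)
        (fun b _ => by ext; simp)
        (fun a _ => by subst hXs; rfl)
    rw [hbij]
    have := Finset.sum_filter_add_sum_filter_not Finset.univ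
      (fun j : Fin n => (j : ℕ) < s) (fun j => (X j ⬝ᵥ v) ^ 2)
    have hfe : Finset.univ.filter (fun j : Fin n => ¬ (j : ℕ) < s)
        = Finset.univ.filter (fun j : Fin n => s ≤ (j : ℕ)) := by
      apply Finset.filter_congr; intro j _; simp [not_lt]
    rw [hfe] at this
    linarith
  obtain ⟨hε0, hε1⟩ := hε
  constructor
  · refine Matrix.PosDef.of_dotProduct_mulVec_pos ?_ fun v hv => ?_
    · have e : ∀ {a b : Type} [Fintype a] [Fintype b] (M : Matrix a b ℝ), Mᴴ = Mᵀ :=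
        fun M => Matrix.ext fun i j => rfl
      unfold Matrix.IsHermitian
      rw [e]
      simp [Matrix.transpose_sub, Matrix.transpose_smul, Matrix.transpose_mul,
        Matrix.transpose_transpose, hAsymm]
    · simp only [star_trivial, Matrix.sub_mulVec, Matrix.smul_mulVec,
        dotProduct_sub, dotProduct_smul, smul_eq_mul]
      have h1 := split v
      have h2 := key v hv
      linarith
  · refine Matrix.PosSemidef.of_dotProduct_mulVec_nonneg ?_ fun v => ?_
    · have e : ∀ {a b : Type} [Fintype a] [Fintype b] (M : Matrix a b ℝ), Mᴴ = Mᵀ :=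
        fun M => Matrix.ext fun i j => rfl
      unfold Matrix.IsHermitian
      rw [e]
      simp [Matrix.transpose_sub, Matrix.transpose_mul, Matrix.transpose_transpose, hAsymm]
    · simp only [star_trivial, Matrix.sub_mulVec, dotProduct_sub]
      have h1 := split v
      have h3 : 0 ≤ ∑ j ∈ Finset.univ.filter (fun j : Fin n => s ≤ (j : ℕ)),
          (X j ⬝ᵥ v) ^ 2 := Finset.sum_nonneg fun j _ => sq_nonneg _
      linarith
end

section
/- Let X be an n×d real matrix of rank d, let α ≥ 0, and let Σ be the diagonal matrix with Σ_{ii} = α and Σ_{jj} = 1 for j ≠ i, where 1 + (α²−1)ℓ_i(X) ≠ 0 and ΣX has rank d. Then the i-th leverage score of ΣX is ℓ_i(ΣX) = α² ℓ_i(X) / (1 + (α²−1) ℓ_i(X)). -/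
open Matrix

private lemma isUnit_of_rank_eq_card {d : ℕ} (A : Matrix (Fin d) (Fin d) ℝ)
    (h : A.rank = d) : IsUnit A := by
  rw [← Matrix.mulVec_surjective_iff_isUnit]
  have ht : LinearMap.range A.mulVecLin = ⊤ := by
    apply Submodule.eq_top_of_finrank_eq
    rw [← Matrix.rank, h]; simp
  exact fun y => by simpa using LinearMap.range_eq_top.mp ht y

private lemma mul_vecMulVec {d : ℕ} (u v : Fin d → ℝ) (M : Matrix (Fin d) (Fin d) ℝ) :
    M * vecMulVec u v = vecMulVec (M *ᵥ u) v := by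
  ext p q
  simp [Matrix.mul_apply, vecMulVec_apply, Matrix.mulVec, dotProduct, Finset.sum_mul, mul_assoc]

private lemma vecMulVec_mul {d : ℕ} (u v : Fin d → ℝ) (M : Matrix (Fin d) (Fin d) ℝ) :
    vecMulVec u v * M = vecMulVec u (Mᵀ *ᵥ v) := by
  ext p q
  simp [Matrix.mul_apply, vecMulVec_apply, Matrix.mulVec, dotProduct, Finset.mul_sum,
    mul_comm, mul_left_comm]

private lemma vecMulVec_mulVec {d : ℕ} (u v w : Fin d → ℝ) :
    vecMulVec u v *ᵥ w = (v ⬝ᵥ w) • u := by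
  ext p
  simp [vecMulVec_apply, Matrix.mulVec, dotProduct, Finset.mul_sum, mul_comm, mul_left_comm]

theorem leverage_score_of_scaled_row_self
    {n d : ℕ} (X : Matrix (Fin n) (Fin d) ℝ) (hX : X.rank = d)
    (α : ℝ) (hα : 0 ≤ α) (i : Fin n)
    (Y : Matrix (Fin n) (Fin d) ℝ)
    (hY : Y = Matrix.diagonal (fun j : Fin n => if j = i then α else 1) * X)
    (hden : 1 + (α ^ 2 - 1) * (X i ⬝ᵥ ((Xᵀ * X)⁻¹ *ᵥ X i)) ≠ 0)
    (hrank : Y.rank = d) :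
    Y i ⬝ᵥ ((Yᵀ * Y)⁻¹ *ᵥ Y i)
      = α ^ 2 * (X i ⬝ᵥ ((Xᵀ * X)⁻¹ *ᵥ X i)) /
        (1 + (α ^ 2 - 1) * (X i ⬝ᵥ ((Xᵀ * X)⁻¹ *ᵥ X i))) := by
  set A : Matrix (Fin d) (Fin d) ℝ := Xᵀ * X with hA
  set x : Fin d → ℝ := X i with hx
  set c : ℝ := α ^ 2 - 1 with hc
  set u : Fin d → ℝ := A⁻¹ *ᵥ x with hu
  set L : ℝ := x ⬝ᵥ u with hL
  -- invertibility
  have hAunit : IsUnit A := by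
    apply isUnit_of_rank_eq_card
    rw [hA]
    have := Matrix.rank_transpose_mul_self X
    rw [this, hX]
  have hAdet : IsUnit A.det := (Matrix.isUnit_iff_isUnit_det A).mp hAunit
  -- A is symmetric, so A⁻¹ is symmetric
  have hAsymm : Aᵀ = A := by rw [hA, Matrix.transpose_mul, Matrix.transpose_transpose]
  have hAinvsymm : (A⁻¹)ᵀ = A⁻¹ := by rw [Matrix.transpose_nonsing_inv, hAsymm]
  have hAu : A *ᵥ u = x := by
    rw [hu, Matrix.mulVec_mulVec, Matrix.mul_nonsing_inv _ hAdet, Matrix.one_mulVec]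
  -- Y i = α • x
  have hYi : Y i = α • x := by
    funext k
    rw [hY]
    simp [Matrix.mul_apply, Matrix.diagonal, hx, Finset.sum_ite_eq', Matrix.mulVec]
  -- Yᵀ * Y = A + c • vecMulVec x x
  have hYY : Yᵀ * Y = A + c • vecMulVec x x := by
    have hYfun : Y = Matrix.of (fun j a => (if j = i then α else 1) * X j a) := by
      rw [hY]; ext j a
      simp [Matrix.mul_apply, Matrix.diagonal]
    rw [hYfun]
    ext a b
    simp only [Matrix.mul_apply, Matrix.transpose_apply, Matrix.of_apply,
      Matrix.add_apply, Matrix.smul_apply, vecMulVec_apply, smul_eq_mul, hA, hx]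
    rw [Finset.sum_congr rfl (g := fun j => X j a * X j b +
        if j = i then c * (X i a * X i b) else 0)]
    · rw [Finset.sum_add_distrib, Finset.sum_ite_eq' Finset.univ i
        (fun _ => c * (X i a * X i b))]
      simp
    · intro j _
      by_cases hj : j = i
      · simp only [hj, if_true, ite_true, eq_self_iff_true, hc]; ring
      · simp [hj]
  -- the Sherman–Morrison inverse
  set k : ℝ := c / (1 + c * L) with hk
  have hkden : k * (1 + c * L) = c := div_mul_cancel₀ c hden
  have htr : (vecMulVec u u)ᵀ = vecMulVec u u := by
    ext p q; simp [vecMulVec_apply, mul_comm]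
  have hxu : u ⬝ᵥ x = L := by rw [dotProduct_comm]
  have hinv : (Yᵀ * Y)⁻¹ = A⁻¹ - k • vecMulVec u u := by
    apply Matrix.inv_eq_right_inv
    rw [hYY]
    rw [Matrix.add_mul, Matrix.mul_sub, Matrix.mul_smul, mul_vecMulVec, hAu,
      Matrix.mul_nonsing_inv _ hAdet, Matrix.smul_mul, Matrix.mul_sub,
      vecMulVec_mul, hAinvsymm, ← hu, Matrix.mul_smul,
      vecMulVec_mul, htr, vecMulVec_mulVec, hxu]
    have h1 : vecMulVec x (L • u) = L • vecMulVec x u := by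
      ext p q; simp [vecMulVec_apply, mul_comm, mul_left_comm]
    rw [h1]
    have h2 : (1 : Matrix (Fin d) (Fin d) ℝ) - k • vecMulVec x u
        + c • (vecMulVec x u - k • L • vecMulVec x u)
        = 1 + (c - c * k * L - k) • vecMulVec x u := by
      ext p q
      simp only [Matrix.add_apply, Matrix.sub_apply, Matrix.smul_apply,
        Matrix.one_apply, vecMulVec_apply, smul_eq_mul]
      ring
    rw [h2]
    have hz : c - c * k * L - k = 0 := by nlinarith [hkden]
    rw [hz, zero_smul, add_zero]
  -- final computation
  rw [hYi, hinv]
  have key : (α • x) ⬝ᵥ ((A⁻¹ - k • vecMulVec u u) *ᵥ (α • x))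
      = α ^ 2 * (L - k * L * L) := by
    rw [Matrix.sub_mulVec, dotProduct_sub, Matrix.mulVec_smul, ← hu,
      Matrix.smul_mulVec, vecMulVec_mulVec]
    simp only [smul_dotProduct, dotProduct_smul, smul_eq_mul, hxu, ← hL,
      dotProduct_smul, dotProduct_comm u x]
    ring
  rw [key]
  have hfin : L - k * L * L = L / (1 + c * L) := by
    rw [hk, eq_div_iff hden]; linear_combination (-(L * L)) * div_mul_cancel₀ c hden
  rw [hfin, mul_div_assoc]
end

section
/- Let X ∈ ℝ^{n×d} have rank d and let V be an n×n diagonal matrix with strictly positive diagonal entries such that V_{ii} ≥ 1 for i ≤ s and V_{ii} ≤ 1 for i > s. Then the sum of the last n−s leverage scores does not increase under scaling: ∑_{i=s+1}^n ℓ_i(VX) ≤ ∑_{i=s+1}^n ℓ_i(X). -/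
open Matrix

private lemma herm_swap {d : ℕ} {S : Matrix (Fin d) (Fin d) ℝ} (hS : S.IsHermitian)
    (u w : Fin d → ℝ) : u ⬝ᵥ (S *ᵥ w) = w ⬝ᵥ (S *ᵥ u) := by
  have hT : Sᵀ = S := by
    have := hS.eq; rwa [conjTranspose_eq_transpose_of_trivial] at this
  rw [dotProduct_mulVec, ← mulVec_transpose, hT, dotProduct_comm]

private lemma inv_sub_inv_psd {d : ℕ} {A B : Matrix (Fin d) (Fin d) ℝ}
    (hA : A.PosDef) (hBA : (B - A).PosSemidef) : (A⁻¹ - B⁻¹).PosSemidef := by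
  have hB : B.PosDef := by
    have := hA.add_posSemidef hBA
    rwa [add_sub_cancel] at this
  have hAu : IsUnit A.det := hA.det_pos.ne'.isUnit
  have hBu : IsUnit B.det := hB.det_pos.ne'.isUnit
  refine .of_dotProduct_mulVec_nonneg ((hA.isHermitian.inv).sub (hB.isHermitian.inv)) fun x => ?_
  have hstar : star x = x := by simp
  rw [hstar]
  set a := A⁻¹ *ᵥ x with ha
  set w := B⁻¹ *ᵥ x with hw
  have hAa : A *ᵥ a = x := by
    rw [ha, mulVec_mulVec, mul_nonsing_inv _ hAu, one_mulVec]
  have hBw : B *ᵥ w = x := by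
    rw [hw, mulVec_mulVec, mul_nonsing_inv _ hBu, one_mulVec]
  have key : x ⬝ᵥ ((A⁻¹ - B⁻¹) *ᵥ x)
      = (a - w) ⬝ᵥ (A *ᵥ (a - w)) + w ⬝ᵥ ((B - A) *ᵥ w) := by
    have e1 : a ⬝ᵥ (A *ᵥ w) = w ⬝ᵥ x := by
      rw [herm_swap hA.isHermitian, hAa]
    have e2 : w ⬝ᵥ (A *ᵥ a) = w ⬝ᵥ x := by rw [hAa]
    have e3 : a ⬝ᵥ (A *ᵥ a) = a ⬝ᵥ x := by rw [hAa]
    have e4 : w ⬝ᵥ (B *ᵥ w) = w ⬝ᵥ x := by rw [hBw]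
    have e5 : x ⬝ᵥ a = a ⬝ᵥ x := dotProduct_comm _ _
    have e6 : x ⬝ᵥ w = w ⬝ᵥ x := dotProduct_comm _ _
    simp only [sub_mulVec, dotProduct_sub, sub_dotProduct, mulVec_sub]
    rw [e1, e2, e3, e4, e5, e6]
    ring
  rw [key]
  exact add_nonneg (by simpa using hA.posSemidef.dotProduct_mulVec_nonneg (a - w)) (by simpa using hBA.dotProduct_mulVec_nonneg w)

private lemma quadQ {n d : ℕ} (X : Matrix (Fin n) (Fin d) ℝ) (u : Fin n → ℝ) (z : Fin d → ℝ) :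
    z ⬝ᵥ ((Xᵀ * diagonal u * X) *ᵥ z) = ∑ i, u i * (X *ᵥ z) i ^ 2 := by
  rw [Matrix.mul_assoc, ← mulVec_mulVec, ← mulVec_mulVec, dotProduct_mulVec,
    ← mulVec_transpose, transpose_transpose]
  simp [dotProduct, mulVec_diagonal]
  exact Finset.sum_congr rfl fun i _ => by ring

private lemma hermQ {n d : ℕ} (X : Matrix (Fin n) (Fin d) ℝ) (u : Fin n → ℝ) :
    (Xᵀ * diagonal u * X).IsHermitian := by
  unfold Matrix.IsHermitian
  rw [conjTranspose_eq_transpose_of_trivial, transpose_mul, transpose_mul,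
    diagonal_transpose, transpose_transpose, Matrix.mul_assoc]

private lemma psdQ {n d : ℕ} (X : Matrix (Fin n) (Fin d) ℝ) (u : Fin n → ℝ)
    (hu : ∀ i, 0 ≤ u i) : (Xᵀ * diagonal u * X).PosSemidef := by
  refine .of_dotProduct_mulVec_nonneg (hermQ X u) fun z => ?_
  have hs : star z = z := by simp
  rw [hs, quadQ]
  exact Finset.sum_nonneg fun i _ => mul_nonneg (hu i) (sq_nonneg _)

private lemma injX {n d : ℕ} (X : Matrix (Fin n) (Fin d) ℝ) (hX : X.rank = d)
    (z : Fin d → ℝ) (hz : X *ᵥ z = 0) : z = 0 := by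
  have hker : LinearMap.ker X.mulVecLin = ⊥ := by
    have h1 := X.mulVecLin.finrank_range_add_finrank_ker
    rw [show Module.finrank ℝ (LinearMap.range X.mulVecLin) = d from hX,
      Module.finrank_pi] at h1
    simp only [Fintype.card_fin] at h1
    have : Module.finrank ℝ (LinearMap.ker X.mulVecLin) = 0 := by omega
    exact Submodule.finrank_eq_zero.mp this
  have : z ∈ LinearMap.ker X.mulVecLin := by simpa [LinearMap.mem_ker] using hz
  simpa [hker] using this

private lemma pdQ {n d : ℕ} (X : Matrix (Fin n) (Fin d) ℝ) (hX : X.rank = d)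
    (u : Fin n → ℝ) (hu : ∀ i, 0 < u i) : (Xᵀ * diagonal u * X).PosDef := by
  refine .of_dotProduct_mulVec_pos (hermQ X u) fun z hz => ?_
  have hs : star z = z := by simp
  rw [hs, quadQ]
  have hy : X *ᵥ z ≠ 0 := fun h => hz (injX X hX z h)
  obtain ⟨i, hi⟩ := Function.ne_iff.mp hy
  have hi' : (X *ᵥ z) i ≠ 0 := by simpa using hi
  have : (0:ℝ) < u i * (X *ᵥ z) i ^ 2 := mul_pos (hu i) (by positivity)
  refine Finset.sum_pos' (fun j _ => mul_nonneg (hu j).le (sq_nonneg _)) ⟨i, Finset.mem_univ i, this⟩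

private lemma sum_trace {n d : ℕ} (X : Matrix (Fin n) (Fin d) ℝ) (M : Matrix (Fin d) (Fin d) ℝ)
    (u : Fin n → ℝ) :
    ∑ i, u i * (X i ⬝ᵥ (M *ᵥ X i)) = (M * (Xᵀ * diagonal u * X)).trace := by
  have h1 : M * (Xᵀ * diagonal u * X) = M * Xᵀ * diagonal u * X := by
    simp only [Matrix.mul_assoc]
  rw [h1, Matrix.trace_mul_comm (M * Xᵀ * diagonal u) X, ← Matrix.mul_assoc,
    ← Matrix.mul_assoc, Matrix.trace_mul_comm _ (diagonal u)]
  simp only [Matrix.trace, Matrix.diag, Matrix.mul_apply, diagonal_apply, ite_mul, zero_mul,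
    Finset.sum_ite_eq, Finset.mem_univ, if_true]
  refine Finset.sum_congr rfl fun i _ => ?_
  simp only [dotProduct, mulVec, dotProduct, Finset.mul_sum]
  rw [Finset.sum_comm]
  refine Finset.sum_congr rfl fun a _ => ?_
  simp only [transpose_apply, Finset.sum_mul, Finset.mul_sum]
  refine Finset.sum_congr rfl fun b _ => ?_
  ring

theorem trailing_leverage_mass_nonincreasing
    {n d s : ℕ} (X : Matrix (Fin n) (Fin d) ℝ) (hX : X.rank = d)
    (v : Fin n → ℝ) (hvpos : ∀ i, 0 < v i)
    (hv1 : ∀ i : Fin n, (i : ℕ) < s → 1 ≤ v i)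
    (hv2 : ∀ i : Fin n, s ≤ (i : ℕ) → v i ≤ 1)
    (Y : Matrix (Fin n) (Fin d) ℝ)
    (hY : Y = Matrix.diagonal v * X) :
    ∑ i ∈ Finset.univ.filter (fun i : Fin n => s ≤ (i : ℕ)),
        Y i ⬝ᵥ ((Yᵀ * Y)⁻¹ *ᵥ Y i)
      ≤ ∑ i ∈ Finset.univ.filter (fun i : Fin n => s ≤ (i : ℕ)),
        X i ⬝ᵥ ((Xᵀ * X)⁻¹ *ᵥ X i) := by
  classical
  -- weights
  set w1 : Fin n → ℝ := fun i => if s ≤ (i : ℕ) then v i * v i else 1 with hw1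
  set w2 : Fin n → ℝ := fun i => v i * v i with hw2
  set wD : Fin n → ℝ := fun i => if s ≤ (i : ℕ) then 0 else 1 with hwD
  set wCv : Fin n → ℝ := fun i => if s ≤ (i : ℕ) then v i * v i else 0 with hwCv
  set wC : Fin n → ℝ := fun i => if s ≤ (i : ℕ) then 1 else 0 with hwC
  set A := Xᵀ * X with hA
  set B1 := Xᵀ * diagonal w1 * X with hB1
  set B2 := Xᵀ * diagonal w2 * X with hB2
  -- quadratic form abbreviation
  set q : Matrix (Fin d) (Fin d) ℝ → Fin n → ℝ := fun M i => X i ⬝ᵥ (M *ᵥ X i) with hq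
  -- A = Q(1)
  have hA1 : A = Xᵀ * diagonal (fun _ : Fin n => (1:ℝ)) * X := by
    rw [hA]; simp [diagonal_one]
  -- Y' * Y = B2
  have hYY : Yᵀ * Y = B2 := by
    rw [hY, transpose_mul, diagonal_transpose, hB2, hw2, Matrix.mul_assoc, Matrix.mul_assoc,
      ← Matrix.mul_assoc (diagonal v), diagonal_mul_diagonal]
  -- positive definiteness
  have hApd : A.PosDef := hA1 ▸ pdQ X hX _ (fun _ => one_pos)
  have hB1pd : B1.PosDef := pdQ X hX _ (fun i => by
    simp only [hw1]; split
    · exact mul_pos (hvpos i) (hvpos i)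
    · exact one_pos)
  have hB2pd : B2.PosDef := pdQ X hX _ (fun i => mul_pos (hvpos i) (hvpos i))
  -- PSD differences
  have hdiff1 : (B2 - B1).PosSemidef := by
    have hdm : (diagonal fun i => w2 i - w1 i) = diagonal w2 - diagonal w1 := by
      ext i j; by_cases h : i = j <;> simp [diagonal_apply, h]
    have : B2 - B1 = Xᵀ * diagonal (fun i => w2 i - w1 i) * X := by
      rw [hB1, hB2, hdm, Matrix.mul_sub, Matrix.sub_mul]
    rw [this]
    refine psdQ X _ fun i => ?_
    simp only [hw1, hw2]
    split
    · simp
    · next h =>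
        have h1 : 1 ≤ v i := hv1 i (by omega)
        nlinarith
  have hdiff2 : (A - B1).PosSemidef := by
    have hdm : (diagonal fun i => 1 - w1 i) = diagonal (fun _ : Fin n => (1:ℝ)) - diagonal w1 := by
      ext i j; by_cases h : i = j <;> simp [diagonal_apply, h]
    have : A - B1 = Xᵀ * diagonal (fun i => 1 - w1 i) * X := by
      rw [hB1, hA1, hdm, Matrix.mul_sub, Matrix.sub_mul]
    rw [this]
    refine psdQ X _ fun i => ?_
    simp only [hw1]
    split
    · next h =>
        have h1 : v i ≤ 1 := hv2 i h
        nlinarith [hvpos i]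
    · simp
  have hps1 : (B1⁻¹ - B2⁻¹).PosSemidef := inv_sub_inv_psd hB1pd hdiff1
  have hps2 : (B1⁻¹ - A⁻¹).PosSemidef := inv_sub_inv_psd hB1pd hdiff2
  -- pointwise quadratic form inequalities
  have hq1 : ∀ i, q B2⁻¹ i ≤ q B1⁻¹ i := by
    intro i
    have := hps1.dotProduct_mulVec_nonneg (X i)
    simp only [star_trivial, sub_mulVec, dotProduct_sub] at this
    simp only [hq]; linarith
  have hq2 : ∀ i, q A⁻¹ i ≤ q B1⁻¹ i := by
    intro i
    have := hps2.dotProduct_mulVec_nonneg (X i)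
    simp only [star_trivial, sub_mulVec, dotProduct_sub] at this
    simp only [hq]; linarith
  -- trace identities
  have hT1 : ∑ i, w1 i * q B1⁻¹ i = (d : ℝ) := by
    rw [hq, sum_trace X B1⁻¹ w1, ← hB1, nonsing_inv_mul _ hB1pd.det_pos.ne'.isUnit]
    simp
  have hT2 : ∑ i, (1:ℝ) * q A⁻¹ i = (d : ℝ) := by
    rw [hq, sum_trace X A⁻¹ (fun _ => 1), ← hA1, nonsing_inv_mul _ hApd.det_pos.ne'.isUnit]
    simp
  -- rewrite the two filtered sums as weighted full sums
  have hLHS : ∑ i ∈ Finset.univ.filter (fun i : Fin n => s ≤ (i : ℕ)),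
      Y i ⬝ᵥ ((Yᵀ * Y)⁻¹ *ᵥ Y i) = ∑ i, wCv i * q B2⁻¹ i := by
    rw [Finset.sum_filter]
    refine Finset.sum_congr rfl fun i _ => ?_
    have hYi : Y i = v i • X i := by
      funext j
      rw [hY]
      simp [Matrix.mul_apply, diagonal_apply, ite_mul, Finset.sum_ite_eq, Pi.smul_apply]
    simp only [hwCv, hq]
    split
    · rw [hYY, hYi, smul_dotProduct, mulVec_smul, dotProduct_smul]
      simp only [smul_eq_mul]; ring
    · simp
  have hRHS : ∑ i ∈ Finset.univ.filter (fun i : Fin n => s ≤ (i : ℕ)),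
      X i ⬝ᵥ ((Xᵀ * X)⁻¹ *ᵥ X i) = ∑ i, wC i * q A⁻¹ i := by
    rw [Finset.sum_filter]
    refine Finset.sum_congr rfl fun i _ => ?_
    simp only [hwC, hq, hA]
    split
    · rw [one_mul]
    · simp
  rw [hLHS, hRHS]
  -- splitting identities
  have hsplit1 : ∑ i, w1 i * q B1⁻¹ i = ∑ i, wD i * q B1⁻¹ i + ∑ i, wCv i * q B1⁻¹ i := by
    rw [← Finset.sum_add_distrib]
    refine Finset.sum_congr rfl fun i _ => ?_
    simp only [hw1, hwD, hwCv]
    split <;> ring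
  have hsplit2 : ∑ i, (1:ℝ) * q A⁻¹ i = ∑ i, wD i * q A⁻¹ i + ∑ i, wC i * q A⁻¹ i := by
    rw [← Finset.sum_add_distrib]
    refine Finset.sum_congr rfl fun i _ => ?_
    simp only [hwD, hwC]
    split <;> ring
  -- inequalities between weighted sums
  have hineq1 : ∑ i, wCv i * q B2⁻¹ i ≤ ∑ i, wCv i * q B1⁻¹ i := by
    refine Finset.sum_le_sum fun i _ => ?_
    refine mul_le_mul_of_nonneg_left (hq1 i) ?_
    simp only [hwCv]; split
    · exact mul_nonneg (hvpos i).le (hvpos i).le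
    · exact le_rfl
  have hineq2 : ∑ i, wD i * q A⁻¹ i ≤ ∑ i, wD i * q B1⁻¹ i := by
    refine Finset.sum_le_sum fun i _ => ?_
    refine mul_le_mul_of_nonneg_left (hq2 i) ?_
    simp only [hwD]; split
    · exact le_rfl
    · exact zero_le_one
  linarith
end
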